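/- Every rc-space is completely regular. -/

import Mathlib

/-!
Urysohn's construction only needs a way to interpolate between a closed set `C` and an open set
`U ⊇ C`. If `C` is regular closed and `U` regular open, then `C` and `Uᶜ` are disjoint regular
closed sets; separating them and taking the interior of the closure of `C`'s neighbourhood gives a
regular open `V` with `C ⊆ V ⊆ closure V ⊆ U`, and `closure V` is again regular closed. So the
construction runs with the invariant "`C` regular closed, `U` regular open", and regularity
supplies such a pair between any point and a closed set missing it.
-/

open Set Topology unitInterval

section

variable {X : Type*} [TopologicalSpace X]

def IsRegularClosed (s : Set X) : Prop := closure (interior s) = s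

def IsRegularOpen (s : Set X) : Prop := interior (closure s) = s

theorem isRegularClosed_closure_interior (s : Set X) : IsRegularClosed (closure (interior s)) :=
  closure_interior_idem

theorem IsOpen.isRegularClosed_closure {s : Set X} (hs : IsOpen s) :
    IsRegularClosed (closure s) := by
  simpa only [hs.interior_eq] using isRegularClosed_closure_interior s

theorem isRegularOpen_interior_closure (s : Set X) : IsRegularOpen (interior (closure s)) :=
  interior_closure_idem

theorem IsClosed.isRegularOpen_interior {s : Set X} (hs : IsClosed s) :
    IsRegularOpen (interior s) := by
  simpa only [hs.closure_eq] using isRegularOpen_interior_closure s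

theorem IsRegularOpen.isRegularClosed_compl {s : Set X} (hs : IsRegularOpen s) :
    IsRegularClosed sᶜ := by
  rw [IsRegularClosed, interior_compl, closure_compl, hs]

theorem IsRegularClosed.isClosed {s : Set X} (hs : IsRegularClosed s) : IsClosed s :=
  hs ▸ isClosed_closure

theorem IsRegularOpen.isOpen {s : Set X} (hs : IsRegularOpen s) : IsOpen s :=
  hs ▸ isOpen_interior

theorem exists_isRegularClosed_subset_isRegularOpen_of_mem_nhds [RegularSpace X] {x : X}
    {s : Set X} (hs : s ∈ 𝓝 x) :
    ∃ c u : Set X, IsRegularClosed c ∧ IsRegularOpen u ∧ x ∈ c ∧ c ⊆ u ∧ u ⊆ s := by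
  obtain ⟨t, ht, htc, hts⟩ := exists_mem_nhds_isClosed_subset hs
  obtain ⟨t', ht', ht'c, ht't⟩ := exists_mem_nhds_isClosed_subset (interior_mem_nhds.2 ht)
  exact ⟨closure (interior t'), interior t, isRegularClosed_closure_interior t',
    htc.isRegularOpen_interior, subset_closure (mem_interior_iff_mem_nhds.2 ht'),
    ht'c.closure_interior_subset.trans ht't, interior_subset.trans hts⟩

section RegularClosedSeparation

variable (hsep : ∀ F G : Set X, IsRegularClosed F → IsRegularClosed G → Disjoint F G →
  SeparatedNhds F G)
include hsep

theorem exists_isRegularOpen_closure_subset {c u : Set X} (hc : IsRegularClosed c)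
    (hu : IsRegularOpen u) (hcu : c ⊆ u) :
    ∃ v, IsOpen v ∧ c ⊆ v ∧ closure v ⊆ u ∧ IsRegularOpen v := by
  obtain ⟨W, W', hW, hW', hcW, huW', hWW'⟩ :=
    hsep c uᶜ hc hu.isRegularClosed_compl (disjoint_compl_right_iff_subset.2 hcu)
  have hWu : closure W ⊆ u :=
    (closure_minimal (subset_compl_iff_disjoint_right.2 hWW') hW'.isClosed_compl).trans
      (compl_subset_comm.1 huW')
  exact ⟨interior (closure W), isOpen_interior, hcW.trans hW.subset_interior_closure,
    isClosed_closure.closure_interior_subset.trans hWu,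
    isRegularOpen_interior_closure W⟩

theorem exists_continuous_zero_one_of_isRegularClosed_subset_isRegularOpen {c u : Set X}
    (hc : IsRegularClosed c) (hu : IsRegularOpen u) (hcu : c ⊆ u) :
    ∃ f : X → I, Continuous f ∧ EqOn f 0 c ∧ EqOn f 1 uᶜ := by
  let cu : Urysohns.CU fun c u : Set X ↦ IsRegularClosed c ∧ IsRegularOpen u :=
  { C := c
    U := u
    P_C_U := ⟨hc, hu⟩
    closed_C := hc.isClosed
    open_U := hu.isOpen
    subset := hcu
    hP := by
      rintro c u - ⟨hc, hu⟩ - hcu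
      obtain ⟨v, hv, hcv, hvu, hv_reg⟩ := exists_isRegularOpen_closure_subset hsep hc hu hcu
      exact ⟨v, hv, hcv, hvu, ⟨hc, hv_reg⟩, hv.isRegularClosed_closure, hu⟩ }
  exact ⟨fun x ↦ ⟨cu.lim x, cu.lim_mem_Icc x⟩, cu.continuous_lim.subtype_mk _,
    fun x hx ↦ Subtype.ext (cu.lim_of_mem_C x hx), fun x hx ↦ Subtype.ext (cu.lim_of_notMem_U x hx)⟩

end RegularClosedSeparation

end

theorem rc_space_completely_regular_general {X : Type*} [TopologicalSpace X]
    [RegularSpace X]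
    (hrc : ∀ F G : Set X, F = closure (interior F) → G = closure (interior G) →
      Disjoint F G →
      ∃ U V : Set X, IsOpen U ∧ IsOpen V ∧ F ⊆ U ∧ G ⊆ V ∧ Disjoint U V) :
    CompletelyRegularSpace X := by
  refine ⟨fun x K hK hx ↦ ?_⟩
  obtain ⟨c, u, hc, hu, hxc, hcu, huK⟩ :=
    exists_isRegularClosed_subset_isRegularOpen_of_mem_nhds (hK.isOpen_compl.mem_nhds hx)
  obtain ⟨f, hf, hf0, hf1⟩ := exists_continuous_zero_one_of_isRegularClosed_subset_isRegularOpen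
    (fun F G hF hG ↦ hrc F G hF.symm hG.symm) hc hu hcu
  exact ⟨f, hf, hf0 hxc, hf1.mono (subset_compl_comm.1 huK)⟩

/-- Every rc-space is completely regular: if `X` is a regular T1 space in which any two
disjoint regular closed sets have disjoint open neighbourhoods, then `X` is completely
regular. -/
theorem rc_space_completely_regular {X : Type*} [TopologicalSpace X]
    [T1Space X] [RegularSpace X]
    (hrc : ∀ F G : Set X, F = closure (interior F) → G = closure (interior G) →
      Disjoint F G →
      ∃ U V : Set X, IsOpen U ∧ IsOpen V ∧ F ⊆ U ∧ G ⊆ V ∧ Disjoint U V) :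
    CompletelyRegularSpace X :=
  rc_space_completely_regular_general hrc
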